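/- arXiv:1910.10898 — 2 statements merged into one kernel-verified Lean document; each statement's English description precedes it below -/
import Mathlib

section
/- Suppose Y and X are conditionally independent given BᵀX. Then the vector of conditional expectiles ξ_X = (f_{τ₁}(X), …, f_{τ_k}(X)) is also conditionally independent of X given BᵀX; consequently every dimension-reduction basis for the regression of Y on X is a dimension-reduction basis for the regression of ξ_X on X (Proposition 1). -/
/-!
For a law `ν` with finite second moment, the risk `b ↦ ∫ φ_τ(y - b) dν` is convex with derivative
`-J(b)`, where the score `J(b) = ∫ φ_τ'(y - b) dν` is strictly decreasing and Lipschitz. So the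
`τ`-expectile is the least point of the closed half-line `{J ≤ 0}`, and that infimum depends
measurably on `ν` along a kernel. Conditional independence `Y ⫫ X | BᵀX` says that the conditional
law of `Y` given `X` is the conditional law of `Y` given `BᵀX`, evaluated at `BᵀX`. Hence `ξ_X` is
almost surely a measurable function of `BᵀX`, and such a variable is conditionally independent of
anything given `BᵀX`.
-/

open MeasureTheory ProbabilityTheory Matrix

/-- The asymmetric squared-error loss `φ_τ`. -/
noncomputable def phiLoss (τ c : ℝ) : ℝ := if c ≤ 0 then (1 - τ) * c ^ 2 else τ * c ^ 2

/-- `a` is the `τ`-th expectile of the measure `ν`: it is the unique minimizer of the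
asymmetric squared-error risk `b ↦ ∫ φ_τ(y - b) ν(dy)`. -/
def IsExpectile (τ : ℝ) (ν : MeasureTheory.Measure ℝ) (a : ℝ) : Prop :=
  ∀ b : ℝ, b ≠ a → ∫ y, phiLoss τ (y - a) ∂ν < ∫ y, phiLoss τ (y - b) ∂ν

noncomputable def phiLossDeriv (τ c : ℝ) : ℝ := if c ≤ 0 then 2 * (1 - τ) * c else 2 * τ * c

lemma measurable_phiLoss (τ : ℝ) : Measurable (phiLoss τ) :=
  Measurable.ite measurableSet_Iic (by fun_prop) (by fun_prop)

lemma measurable_phiLossDeriv (τ : ℝ) : Measurable (phiLossDeriv τ) :=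
  Measurable.ite measurableSet_Iic (by fun_prop) (by fun_prop)

section Pointwise

variable {τ : ℝ}

lemma abs_phiLoss_le (hτ : τ ∈ Set.Icc (0 : ℝ) 1) (c : ℝ) : |phiLoss τ c| ≤ c ^ 2 := by
  obtain ⟨h0, h1⟩ := hτ
  unfold phiLoss
  split_ifs <;> rw [abs_of_nonneg (by positivity)] <;> nlinarith [sq_nonneg c]

lemma abs_phiLossDeriv_le (hτ : τ ∈ Set.Icc (0 : ℝ) 1) (c : ℝ) :
    |phiLossDeriv τ c| ≤ 2 * |c| := by
  obtain ⟨h0, h1⟩ := hτ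
  unfold phiLossDeriv
  split_ifs <;> rw [abs_mul, abs_mul, abs_two]
  · rw [abs_of_nonneg (by linarith : 0 ≤ 1 - τ)]; nlinarith [abs_nonneg c]
  · rw [abs_of_nonneg h0]; nlinarith [abs_nonneg c]

lemma mul_abs_le_abs_phiLossDeriv (hτ : τ ∈ Set.Icc (0 : ℝ) 1) (c : ℝ) :
    2 * min τ (1 - τ) * |c| ≤ |phiLossDeriv τ c| := by
  obtain ⟨h0, h1⟩ := hτ
  have hmin : 0 ≤ min τ (1 - τ) := le_min h0 (by linarith)
  unfold phiLossDeriv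
  split_ifs <;> rw [abs_mul, abs_mul, abs_two]
  · rw [abs_of_nonneg (by linarith : 0 ≤ 1 - τ)]
    nlinarith [min_le_right τ (1 - τ), abs_nonneg c]
  · rw [abs_of_nonneg h0]
    nlinarith [min_le_left τ (1 - τ), abs_nonneg c]

lemma phiLossDeriv_sub_le (hτ : τ ∈ Set.Icc (0 : ℝ) 1) {c c' : ℝ} (h : c' ≤ c) :
    phiLossDeriv τ c - phiLossDeriv τ c' ≤ 2 * (c - c') := by
  obtain ⟨h0, h1⟩ := hτ
  unfold phiLossDeriv
  split_ifs <;> nlinarith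

lemma mul_sub_le_phiLossDeriv_sub (hτ : τ ∈ Set.Icc (0 : ℝ) 1) {c c' : ℝ} (h : c' ≤ c) :
    2 * min τ (1 - τ) * (c - c') ≤ phiLossDeriv τ c - phiLossDeriv τ c' := by
  obtain ⟨h0, h1⟩ := hτ
  have := min_le_left τ (1 - τ)
  have := min_le_right τ (1 - τ)
  unfold phiLossDeriv
  split_ifs <;> nlinarith

lemma phiLoss_add_phiLossDeriv_mul_le (hτ : τ ∈ Set.Icc (0 : ℝ) 1) (u v : ℝ) :
    phiLoss τ u + phiLossDeriv τ u * (v - u) ≤ phiLoss τ v := by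
  obtain ⟨h0, h1⟩ := hτ
  unfold phiLoss phiLossDeriv
  split_ifs with hu hv hv
  · nlinarith [mul_nonneg (sub_nonneg.2 h1) (sq_nonneg (v - u))]
  · nlinarith [mul_nonneg h0 (sq_nonneg v), mul_nonneg (sub_nonneg.2 h1) (sq_nonneg u),
      mul_nonneg (sub_nonneg.2 h1) (mul_nonneg (neg_nonneg.2 hu) (le_of_lt (not_le.1 hv)))]
  · nlinarith [mul_nonneg h0 (sq_nonneg u), mul_nonneg (sub_nonneg.2 h1) (sq_nonneg v),
      mul_nonneg h0 (mul_nonneg (le_of_lt (not_le.1 hu)) (neg_nonneg.2 hv))]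
  · nlinarith [mul_nonneg h0 (sq_nonneg (v - u))]

end Pointwise

section Integrability

variable {τ : ℝ} {ν : Measure ℝ} [IsFiniteMeasure ν]

lemma integrable_phiLossDeriv_sub_iff (hτ : τ ∈ Set.Ioo (0 : ℝ) 1) (b : ℝ) :
    Integrable (fun y => phiLossDeriv τ (y - b)) ν ↔ Integrable id ν := by
  have hτ' := Set.Ioo_subset_Icc_self hτ
  have hm : 0 < min τ (1 - τ) := lt_min hτ.1 (by linarith [hτ.2])
  have hshift : Integrable (fun y => y - b) ν ↔ Integrable id ν := by
    simp_rw [sub_eq_add_neg]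
    exact integrable_add_const_iff
  rw [← hshift]
  refine ⟨fun h => ?_, fun h => ?_⟩
  · refine (h.norm.const_mul (2 * min τ (1 - τ))⁻¹).mono' (by fun_prop)
      (Filter.Eventually.of_forall fun y => ?_)
    rw [Real.norm_eq_abs, Real.norm_eq_abs, le_inv_mul_iff₀ (by positivity)]
    exact mul_abs_le_abs_phiLossDeriv hτ' _
  · refine (h.norm.const_mul 2).mono'
      ((measurable_phiLossDeriv τ).comp (by fun_prop)).aestronglyMeasurable
      (Filter.Eventually.of_forall fun y => ?_)
    rw [Real.norm_eq_abs, Real.norm_eq_abs]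
    exact abs_phiLossDeriv_le hτ' _

lemma integrable_phiLoss_sub (hτ : τ ∈ Set.Icc (0 : ℝ) 1) (hν : MemLp id 2 ν)
    (b : ℝ) : Integrable (fun y => phiLoss τ (y - b)) ν := by
  refine ((hν.integrable_sq.const_mul 2).add (integrable_const (2 * b ^ 2))).mono'
    ((measurable_phiLoss τ).comp (by fun_prop)).aestronglyMeasurable
    (Filter.Eventually.of_forall fun y => ?_)
  rw [Real.norm_eq_abs]
  calc |phiLoss τ (y - b)| ≤ (y - b) ^ 2 := abs_phiLoss_le hτ _
    _ ≤ 2 * y ^ 2 + 2 * b ^ 2 := by nlinarith [sq_nonneg (y + b)]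

end Integrability

/-- Minus the derivative of the risk `b ↦ ∫ φ_τ(y - b) dν`. -/
noncomputable def expectileScore (τ : ℝ) (ν : Measure ℝ) (b : ℝ) : ℝ :=
  ∫ y, phiLossDeriv τ (y - b) ∂ν

section Score

variable {τ : ℝ} {ν : Measure ℝ} [IsProbabilityMeasure ν]

lemma expectileScore_sub_le (hτ : τ ∈ Set.Ioo (0 : ℝ) 1) (hν : Integrable id ν) {b b' : ℝ}
    (h : b ≤ b') : expectileScore τ ν b - expectileScore τ ν b' ≤ 2 * (b' - b) := by
  have hint := fun c => (integrable_phiLossDeriv_sub_iff hτ c).2 hν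
  rw [expectileScore, expectileScore, ← integral_sub (hint b) (hint b')]
  calc _ ≤ ∫ _, 2 * (b' - b) ∂ν := integral_mono ((hint b).sub (hint b')) (integrable_const _)
          fun y => by
            simpa only [Pi.sub_apply, sub_sub_sub_cancel_left] using
              phiLossDeriv_sub_le (Set.Ioo_subset_Icc_self hτ) (by linarith : y - b' ≤ y - b)
    _ = 2 * (b' - b) := by simp

lemma mul_sub_le_expectileScore_sub (hτ : τ ∈ Set.Ioo (0 : ℝ) 1) (hν : Integrable id ν)
    {b b' : ℝ} (h : b ≤ b') :
    2 * min τ (1 - τ) * (b' - b) ≤ expectileScore τ ν b - expectileScore τ ν b' := by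
  have hint := fun c => (integrable_phiLossDeriv_sub_iff hτ c).2 hν
  rw [expectileScore, expectileScore, ← integral_sub (hint b) (hint b')]
  calc 2 * min τ (1 - τ) * (b' - b) = ∫ _, 2 * min τ (1 - τ) * (b' - b) ∂ν := by simp
    _ ≤ _ := integral_mono (integrable_const _) ((hint b).sub (hint b')) fun y => by
          simpa only [Pi.sub_apply, sub_sub_sub_cancel_left] using
            mul_sub_le_phiLossDeriv_sub (Set.Ioo_subset_Icc_self hτ) (by linarith : y - b' ≤ y - b)

lemma antitone_expectileScore (hτ : τ ∈ Set.Ioo (0 : ℝ) 1) (hν : Integrable id ν) :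
    Antitone (expectileScore τ ν) := fun b b' h => by
  have hm : 0 ≤ min τ (1 - τ) := le_min hτ.1.le (by linarith [hτ.2])
  nlinarith [mul_sub_le_expectileScore_sub hτ hν h]

lemma lipschitzWith_expectileScore (hτ : τ ∈ Set.Ioo (0 : ℝ) 1) (hν : Integrable id ν) :
    LipschitzWith 2 (expectileScore τ ν) := by
  refine LipschitzWith.of_dist_le_mul fun b b' => ?_
  rw [Real.dist_eq, Real.dist_eq, NNReal.coe_ofNat]
  rcases le_total b b' with h | h
  · have := antitone_expectileScore hτ hν h
    rw [abs_of_nonneg (by linarith), abs_of_nonpos (by linarith)]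
    linarith [expectileScore_sub_le hτ hν h]
  · have := antitone_expectileScore hτ hν h
    rw [abs_of_nonpos (by linarith), abs_of_nonneg (by linarith)]
    linarith [expectileScore_sub_le hτ hν h]

lemma integral_phiLoss_sub_le (hτ : τ ∈ Set.Ioo (0 : ℝ) 1) (hν : MemLp id 2 ν) (a b : ℝ) :
    ∫ y, phiLoss τ (y - b) ∂ν ≤ ∫ y, phiLoss τ (y - a) ∂ν - (b - a) * expectileScore τ ν b := by
  have hτ' := Set.Ioo_subset_Icc_self hτ
  have hint := (integrable_phiLossDeriv_sub_iff hτ b).2 (hν.integrable one_le_two)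
  have htangent := integral_mono
    (f := fun y => phiLoss τ (y - b) + phiLossDeriv τ (y - b) * (b - a))
    ((integrable_phiLoss_sub hτ' hν b).add (hint.mul_const (b - a)))
    (integrable_phiLoss_sub hτ' hν a) fun y => by
      simpa only [sub_sub_sub_cancel_left] using phiLoss_add_phiLossDeriv_mul_le hτ' (y - b) (y - a)
  rw [integral_add (integrable_phiLoss_sub hτ' hν b) (hint.mul_const _), integral_mul_const]
    at htangent
  rw [expectileScore]
  linarith

lemma isLeast_of_isExpectile (hτ : τ ∈ Set.Ioo (0 : ℝ) 1) (hν : MemLp id 2 ν) {a : ℝ}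
    (ha : IsExpectile τ ν a) : IsLeast {b | expectileScore τ ν b ≤ 0} a := by
  -- The score is positive left of `a` and negative right of it; closedness then puts `a` in the set.
  have hsign : ∀ b ≠ a, (b - a) * expectileScore τ ν b < 0 := fun b hb => by
    linarith [integral_phiLoss_sub_le hτ hν a b, ha b hb]
  have hclosed : IsClosed {b | expectileScore τ ν b ≤ 0} :=
    isClosed_le (lipschitzWith_expectileScore hτ (hν.integrable one_le_two)).continuous
      continuous_const
  have hright : Set.Ioi a ⊆ {b | expectileScore τ ν b ≤ 0} := fun b (hb : a < b) => by
    have := hsign b (ne_of_gt hb)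
    have : 0 < b - a := sub_pos.2 hb
    show expectileScore τ ν b ≤ 0
    nlinarith
  refine ⟨hclosed.closure_subset_iff.2 hright (by rw [closure_Ioi]; exact Set.self_mem_Ici),
    fun b (hb : expectileScore τ ν b ≤ 0) => not_lt.1 fun hba => ?_⟩
  have := hsign b (ne_of_lt hba)
  have : b - a < 0 := sub_neg.2 hba
  nlinarith

end Score

/-- The smallest zero of the decreasing score. It is the `τ`-expectile when `ν` has a second moment
(`expectile_eq_of_isExpectile`), and the junk value `0` when `ν` has no first moment. -/
noncomputable def expectile (τ : ℝ) (ν : Measure ℝ) : ℝ :=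
  sInf {b | expectileScore τ ν b ≤ 0}

section Expectile

variable {τ : ℝ} {ν : Measure ℝ} [IsProbabilityMeasure ν]

lemma expectile_eq_of_isExpectile (hτ : τ ∈ Set.Ioo (0 : ℝ) 1) (hν : MemLp id 2 ν) {a : ℝ}
    (ha : IsExpectile τ ν a) : expectile τ ν = a :=
  (isLeast_of_isExpectile hτ hν ha).csInf_eq

lemma expectile_le_iff (hτ : τ ∈ Set.Ioo (0 : ℝ) 1) (hν : Integrable id ν) (c : ℝ) :
    expectile τ ν ≤ c ↔ expectileScore τ ν c ≤ 0 := by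
  set J := expectileScore τ ν
  set m := 2 * min τ (1 - τ)
  have hm : 0 < m := mul_pos two_pos (lt_min hτ.1 (by linarith [hτ.2]))
  have hne : {b | J b ≤ 0}.Nonempty := by
    refine ⟨max 0 (J 0 / m), ?_⟩
    have := mul_sub_le_expectileScore_sub hτ hν (le_max_left 0 (J 0 / m))
    have := (div_le_iff₀ hm).1 (le_max_right 0 (J 0 / m))
    show J _ ≤ 0
    linarith
  have hbdd : BddBelow {b | J b ≤ 0} := by
    refine ⟨min 0 (J 0 / m), fun b (hb : J b ≤ 0) => ?_⟩
    rcases le_total 0 b with h | h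
    · exact min_le_of_left_le h
    · have := mul_sub_le_expectileScore_sub hτ hν h
      exact min_le_of_right_le ((div_le_iff₀ hm).2 (by linarith))
  have hleast := (isClosed_le (lipschitzWith_expectileScore hτ hν).continuous
    continuous_const).isLeast_csInf hne hbdd
  exact ⟨fun h => (antitone_expectileScore hτ hν h).trans hleast.1, fun h => hleast.2 h⟩

lemma expectile_of_not_integrable (hτ : τ ∈ Set.Ioo (0 : ℝ) 1) (hν : ¬Integrable id ν) :
    expectile τ ν = 0 := by
  have hJ : ∀ b, expectileScore τ ν b = 0 := fun b =>
    integral_undef (mt (integrable_phiLossDeriv_sub_iff hτ b).1 hν)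
  simp [expectile, hJ]

lemma measurable_expectile_comp {Z : Type*} [MeasurableSpace Z] (hτ : τ ∈ Set.Ioo (0 : ℝ) 1)
    (κ : Kernel Z ℝ) [IsMarkovKernel κ] : Measurable fun z => expectile τ (κ z) := by
  refine measurable_of_Iic fun c => ?_
  have hint : MeasurableSet {z | Integrable id (κ z)} :=
    measurableSet_kernel_integrable (f := fun _ y => y) measurable_snd.stronglyMeasurable
  have hscore : Measurable fun z => expectileScore τ (κ z) c :=
    (((measurable_phiLossDeriv τ).comp (by fun_prop : Measurable fun q : Z × ℝ => q.2 - c)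
      ).stronglyMeasurable.integral_kernel_prod_right').measurable
  have hpre : (fun z => expectile τ (κ z)) ⁻¹' Set.Iic c =
      {z | Integrable id (κ z)} ∩ {z | expectileScore τ (κ z) c ≤ 0} ∪
        {z | Integrable id (κ z)}ᶜ ∩ {_z | (0 : ℝ) ≤ c} := by
    ext z
    by_cases hz : Integrable id (κ z)
    · simp [hz, expectile_le_iff hτ hz]
    · simp [hz, expectile_of_not_integrable hτ hz]
  rw [hpre]
  exact (hint.inter (measurableSet_le hscore measurable_const)).union
    (hint.compl.inter (MeasurableSet.const _))

end Expectile

section CondIndep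

variable {Ω β γ δ : Type*} {m' : MeasurableSpace Ω} [mΩ : MeasurableSpace Ω]
  {μ : Measure Ω} [IsFiniteMeasure μ]

lemma ae_memLp_two_condDistrib [MeasurableSpace β] {X : Ω → β} {Y : Ω → ℝ}
    (hX : Measurable X) (hY : Measurable Y) (hY2 : MemLp Y 2 μ) :
    ∀ᵐ x ∂μ.map X, MemLp id 2 (condDistrib Y X μ x) := by
  have hsq : Integrable (fun q : β × ℝ => q.2 ^ 2) (μ.map fun ω => (X ω, Y ω)) := by
    rw [integrable_map_measure (by fun_prop) (hX.prodMk hY).aemeasurable]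
    exact hY2.integrable_sq
  filter_upwards [hsq.condDistrib_ae_map hY.aemeasurable] with x hx
  exact (memLp_two_iff_integrable_sq aestronglyMeasurable_id).2 hx

variable [StandardBorelSpace Ω]

lemma ProbabilityTheory.CondIndepFun.congr_left {hm' : m' ≤ mΩ} [MeasurableSpace β] [MeasurableSpace γ]
    {f f' : Ω → β} {g : Ω → γ} (h : CondIndepFun m' hm' f g μ) (hf : f =ᵐ[μ] f') :
    CondIndepFun m' hm' f' g μ :=
  Kernel.IndepFun.congr' h (by
    refine Measure.ae_ae_of_ae_comp ?_
    rwa [condExpKernel_comp_trim hm']) (ae_of_all _ fun _ => Filter.EventuallyEq.rfl)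

lemma condDistrib_ae_eq_comap_of_condIndepFun [MeasurableSpace β] [StandardBorelSpace β]
    [Nonempty β] [MeasurableSpace γ] [StandardBorelSpace γ] [Nonempty γ] [MeasurableSpace δ]
    [MeasurableEq δ] {X : Ω → β} {Y : Ω → γ} {g : β → δ} (hX : Measurable X) (hY : Measurable Y)
    (hg : Measurable g) {hm : MeasurableSpace.comap (fun ω => g (X ω)) inferInstance ≤ mΩ}
    (h : CondIndepFun (MeasurableSpace.comap (fun ω => g (X ω)) inferInstance) hm Y X μ) :
    condDistrib Y X μ =ᵐ[μ.map X] (condDistrib Y (fun ω => g (X ω)) μ).comap g hg := by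
  set Z : Ω → δ × β := fun ω => (g (X ω), X ω)
  have hZ : Measurable Z := (hg.comp hX).prodMk hX
  have hprod : condDistrib Y Z μ =ᵐ[μ.map Z]
      (condDistrib Y (fun ω => g (X ω)) μ).prodMkRight β :=
    (condIndepFun_iff_condDistrib_prod_ae_eq_prodMkRight hY hX (hg.comp hX)).1 h.symm
  have hgraph : ∀ᵐ z ∂μ.map Z, z.1 = g z.2 :=
    (ae_map_iff hZ.aemeasurable (measurableSet_eq_fun measurable_fst (hg.comp measurable_snd))).2
      (ae_of_all _ fun _ => rfl)
  have hZY : HasCondDistrib Y Z (((condDistrib Y (fun ω => g (X ω)) μ).comap g hg).comap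
      Prod.snd (measurable_snd : Measurable (Prod.snd : δ × β → β))) μ := by
    refine ⟨by fun_prop, (condDistrib_ae_eq_iff_measure_eq_compProd Z hY.aemeasurable _).1 ?_⟩
    filter_upwards [hprod, hgraph] with z hz hz'
    rw [hz, Kernel.prodMkRight_apply, Kernel.comap_apply, Kernel.comap_apply, hz']
  exact condDistrib_ae_eq_of_measure_eq_compProd X hY.aemeasurable hZY.comp_right.map_eq

end CondIndep

theorem statement0_general
    {Ω : Type*} [mΩ : MeasurableSpace Ω] [StandardBorelSpace Ω]
    (P : Measure Ω) [IsProbabilityMeasure P]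
    {p d k : ℕ}
    (X : Ω → Fin p → ℝ) (hXmeas : Measurable X)
    (Y : Ω → ℝ) (hYmeas : Measurable Y) (hY2 : MemLp Y 2 P)
    (B : Matrix (Fin p) (Fin d) ℝ)
    (hm : MeasurableSpace.comap (fun ω => Bᵀ.mulVec (X ω)) inferInstance ≤ mΩ)
    (hYX : CondIndepFun (MeasurableSpace.comap (fun ω => Bᵀ.mulVec (X ω)) inferInstance) hm
      Y X P)
    (τ : Fin k → ℝ) (hτ : ∀ ℓ, τ ℓ ∈ Set.Ioo (0 : ℝ) 1)
    (f : Fin k → (Fin p → ℝ) → ℝ)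
    (hexp : ∀ ℓ, ∀ᵐ x ∂(P.map X), IsExpectile (τ ℓ) (condDistrib Y X P x) (f ℓ x)) :
    CondIndepFun (MeasurableSpace.comap (fun ω => Bᵀ.mulVec (X ω)) inferInstance) hm
      (fun ω => fun ℓ => f ℓ (X ω)) X P := by
  have hB : Measurable fun x : Fin p → ℝ => Bᵀ *ᵥ x := by fun_prop
  set ν := condDistrib Y (fun ω => Bᵀ *ᵥ X ω) P
  set H : (Fin d → ℝ) → Fin k → ℝ := fun z ℓ => expectile (τ ℓ) (ν z)
  have hH : Measurable H := measurable_pi_lambda _ fun ℓ => measurable_expectile_comp (hτ ℓ) ν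
  have hfH : ∀ᵐ x ∂P.map X, (fun ℓ => f ℓ x) = H (Bᵀ *ᵥ x) := by
    filter_upwards [condDistrib_ae_eq_comap_of_condIndepFun hXmeas hYmeas hB hYX,
      ae_memLp_two_condDistrib hXmeas hYmeas hY2, ae_all_iff.2 hexp] with x hcond hmom hexpx
    funext ℓ
    rw [hcond, Kernel.comap_apply] at hmom hexpx
    exact (expectile_eq_of_isExpectile (hτ ℓ) hmom (hexpx ℓ)).symm
  have hHW : CondIndepFun _ hm (fun ω => H (Bᵀ *ᵥ X ω)) X P :=
    condIndepFun_of_measurable_left (hH.comp (comap_measurable _)) hXmeas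
  have hξ : (fun ω ℓ => f ℓ (X ω)) =ᵐ[P] fun ω => H (Bᵀ *ᵥ X ω) :=
    ae_of_ae_map hXmeas.aemeasurable hfH
  exact hHW.congr_left hξ.symm

/-- **Proposition 1**: if `Y ⫫ X | BᵀX`, then the vector of conditional expectiles
`ξ_X = (f_{τ₁}(X), …, f_{τ_k}(X))` is also conditionally independent of `X` given `BᵀX`;
that is, every dimension-reduction basis `B` for the regression of `Y` on `X` is a
dimension-reduction basis for the regression of `ξ_X` on `X`. -/
theorem statement0
    {Ω : Type*} [mΩ : MeasurableSpace Ω] [StandardBorelSpace Ω] [Nonempty Ω]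
    (P : Measure Ω) [IsProbabilityMeasure P]
    {p d k : ℕ}
    (X : Ω → Fin p → ℝ) (hXmeas : Measurable X) (hX2 : MemLp X 2 P)
    (Y : Ω → ℝ) (hYmeas : Measurable Y) (hY2 : MemLp Y 2 P)
    (B : Matrix (Fin p) (Fin d) ℝ) (hBrank : B.rank = d)
    (hm : MeasurableSpace.comap (fun ω => Bᵀ.mulVec (X ω)) inferInstance ≤ mΩ)
    (hYX : CondIndepFun (MeasurableSpace.comap (fun ω => Bᵀ.mulVec (X ω)) inferInstance) hm
      Y X P)
    (τ : Fin k → ℝ) (hτ : ∀ ℓ, τ ℓ ∈ Set.Ioo (0 : ℝ) 1) (hτmono : StrictMono τ)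
    (f : Fin k → (Fin p → ℝ) → ℝ) (hfmeas : ∀ ℓ, Measurable (f ℓ))
    (hexp : ∀ ℓ, ∀ᵐ x ∂(P.map X), IsExpectile (τ ℓ) (condDistrib Y X P x) (f ℓ x)) :
    CondIndepFun (MeasurableSpace.comap (fun ω => Bᵀ.mulVec (X ω)) inferInstance) hm
      (fun ω => fun ℓ => f ℓ (X ω)) X P :=
  statement0_general (mΩ := mΩ) P X hXmeas Y hYmeas hY2 B hm hYX τ hτ f hexp
end

section
/- Assume E[X] = 0, Σ positive definite, the LCM assumption E[X | σ(BᵀX)] = P_Σ(B) X a.s., and the CCV assumption that Var(X | σ(BᵀX)) is almost surely a nonrandom matrix. Then E[XXᵀ − Σ | σ(BᵀX)] = P_Σ(B) (XXᵀ − Σ) P_Σ(B)ᵀ almost surely, where P_Σ(B) = Σ B (BᵀΣB)⁻¹ Bᵀ. -/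
open MeasureTheory ProbabilityTheory Matrix

/-! With `Q = P_Σ(B)`, LCM and CCV together say that `E[XXᵀ | BᵀX] = C + (QX)(QX)ᵀ` for a constant
matrix `C`. Taking expectations identifies `C = Σ - QΣQᵀ`, so
`E[XXᵀ - Σ | BᵀX] = QXXᵀQᵀ - QΣQᵀ = Q(XXᵀ - Σ)Qᵀ`. -/

theorem Matrix.mul_vecMulVec_mul_transpose {ι κ R : Type*} [Fintype ι] [CommSemiring R]
    (Q : Matrix κ ι R) (x y : ι → R) : Q * vecMulVec x y * Qᵀ = vecMulVec (Q *ᵥ x) (Q *ᵥ y) := by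
  rw [mul_vecMulVec, vecMulVec_mul, vecMul_transpose]

section

variable {Ω ι κ : Type*} [Fintype ι] {m mΩ : MeasurableSpace Ω} {P : Measure Ω}
  {X : Ω → ι → ℝ}

theorem MeasureTheory.MemLp.integrable_mul_apply (hX : MemLp X 2 P) (i j : ι) :
    Integrable (fun ω => X ω i * X ω j) P :=
  (hX.eval i).integrable_mul (hX.eval j)

theorem MeasureTheory.MemLp.integrable_mul_apply_pi (hX : MemLp X 2 P) :
    Integrable (fun ω i j => X ω i * X ω j) P :=
  Integrable.of_eval fun i => Integrable.of_eval fun j => hX.integrable_mul_apply i j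

theorem MeasureTheory.MemLp.mulVec [Fintype κ] {q : ENNReal} (hX : MemLp X q P)
    (Q : Matrix κ ι ℝ) :
    MemLp (fun ω => Q *ᵥ X ω) q P :=
  (LinearMap.toContinuousLinearMap (Matrix.mulVecLin Q)).comp_memLp' hX

theorem integral_mulVec_mul_mulVec (hX : MemLp X 2 P) (Q : Matrix κ ι ℝ) (i j : κ) :
    ∫ ω, (Q *ᵥ X ω) i * (Q *ᵥ X ω) j ∂P
      = (Q * Matrix.of (fun k l => ∫ ω, X ω k * X ω l ∂P) * Qᵀ) i j := by
  have hexpand : ∀ x : ι → ℝ,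
      (Q *ᵥ x) i * (Q *ᵥ x) j = ∑ l, (∑ k, Q i k * (x k * x l)) * Q j l := fun x => by
    rw [← vecMulVec_apply, ← mul_vecMulVec_mul_transpose]
    simp only [mul_apply, vecMulVec_apply, transpose_apply]
  have hterm : ∀ k l, Integrable (fun ω => Q i k * (X ω k * X ω l)) P := fun k l =>
    (hX.integrable_mul_apply k l).const_mul _
  simp_rw [hexpand]
  rw [integral_finsetSum _ fun l _ => (integrable_finsetSum _ fun k _ => hterm k l).mul_const _]
  refine Finset.sum_congr rfl fun l _ => ?_
  rw [integral_mul_const, integral_finsetSum _ fun k _ => hterm k l]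
  simp only [integral_const_mul, mul_apply, of_apply, transpose_apply]

theorem eq_integral_sub_of_condExp_ae_eq_const_add {E : Type*} [NormedAddCommGroup E]
    [NormedSpace ℝ E] [CompleteSpace E] [IsProbabilityMeasure P] (hm : m ≤ mΩ) {Z W : Ω → E}
    {c : E} (hW : Integrable W P) (h : P[Z|m] =ᵐ[P] fun ω => c + W ω) :
    c = ∫ ω, Z ω ∂P - ∫ ω, W ω ∂P := by
  rw [← integral_condExp hm, integral_congr_ae h, integral_add (integrable_const c) hW,
    integral_const, probReal_univ, one_smul, add_sub_cancel_right]

theorem condExp_mul_sub_ae_eq_of_condExp_ae_eq_mulVec_of_condCov_ae_eq_const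
    [IsProbabilityMeasure P] (hm : m ≤ mΩ) (hX : MemLp X 2 P) (S : Matrix ι ι ℝ)
    (hS : ∀ i j, S i j = ∫ ω, X ω i * X ω j ∂P) (Q : Matrix ι ι ℝ)
    (hLCM : P[X|m] =ᵐ[P] fun ω => Q *ᵥ X ω)
    (hCCV : ∃ C : Matrix ι ι ℝ, (fun ω => P[fun ω' => fun i j => X ω' i * X ω' j | m] ω
        - fun i j => P[X|m] ω i * P[X|m] ω j) =ᵐ[P] fun _ => fun i j => C i j) :
    P[fun ω => fun i j => X ω i * X ω j - S i j | m] =ᵐ[P] fun ω => fun i j =>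
      (Q * (Matrix.of (fun i' j' => X ω i' * X ω j') - S) * Qᵀ) i j := by
  obtain ⟨C, hC⟩ := hCCV
  have hXX := hX.integrable_mul_apply_pi
  have hQXQX := (hX.mulVec Q).integrable_mul_apply_pi
  have hsecond : P[fun ω i j => X ω i * X ω j | m] =ᵐ[P]
      fun ω => (fun i j => C i j) + fun i j => (Q *ᵥ X ω) i * (Q *ᵥ X ω) j := by
    filter_upwards [hC, hLCM] with ω hCω hLω
    rw [← hLω, ← hCω, sub_add_cancel]
  have hS' : S = Matrix.of fun k l => ∫ ω, X ω k * X ω l ∂P := by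
    ext k l
    exact hS k l
  have hCval : C = S - Q * S * Qᵀ := by
    ext i j
    have hCij := congrFun (congrFun
      (eq_integral_sub_of_condExp_ae_eq_const_add hm hQXQX hsecond) i) j
    rw [Pi.sub_apply, Pi.sub_apply, eval_integral hXX.eval, eval_integral (hXX.eval i).eval,
      eval_integral hQXQX.eval, eval_integral (hQXQX.eval i).eval,
      integral_mulVec_mul_mulVec hX, ← hS', ← hS] at hCij
    exact hCij
  have hsplit : (fun ω => fun i j => X ω i * X ω j - S i j)
      = (fun ω i j => X ω i * X ω j) - fun _ i j => S i j := rfl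
  rw [hsplit]
  refine (condExp_sub hXX (integrable_const _) m).trans ?_
  rw [condExp_const hm]
  filter_upwards [hsecond] with ω hω
  ext i j
  have houter : Matrix.of (fun i' j' => X ω i' * X ω j') = vecMulVec (X ω) (X ω) := rfl
  rw [Pi.sub_apply, hω, houter, mul_sub, sub_mul, mul_vecMulVec_mul_transpose, hCval]
  simp only [Pi.add_apply, Pi.sub_apply, Matrix.sub_apply, vecMulVec_apply]
  ring

end

theorem statement10_general
    {Ω : Type*} [mΩ : MeasurableSpace Ω]
    (P : Measure Ω) [IsProbabilityMeasure P]
    {p d : ℕ}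
    (X : Ω → Fin p → ℝ) (hXmeas : Measurable X) (hX2 : MemLp X 2 P)
    (Sig : Matrix (Fin p) (Fin p) ℝ)
    (hSig : ∀ i j, Sig i j = ∫ ω, X ω i * X ω j ∂P)
    (B : Matrix (Fin p) (Fin d) ℝ)
    -- LCM assumption with `P_Σ(B) = Sigma B (Bᵀ Sigma B)⁻¹ Bᵀ`
    (hLCM : condExp (MeasurableSpace.comap (fun ω' => Bᵀ.mulVec (X ω')) inferInstance) P X
      =ᵐ[P] fun ω => (Sig * B * (Bᵀ * Sig * B)⁻¹ * Bᵀ).mulVec (X ω))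
    -- CCV assumption: the conditional variance is a.s. equal to a nonrandom matrix
    (hCCV : ∃ C : Matrix (Fin p) (Fin p) ℝ, (fun ω =>
        condExp (MeasurableSpace.comap (fun ω' => Bᵀ.mulVec (X ω')) inferInstance) P
          (fun ω' => fun i j => X ω' i * X ω' j) ω
        - fun i j =>
            condExp (MeasurableSpace.comap (fun ω' => Bᵀ.mulVec (X ω')) inferInstance) P X ω i *
            condExp (MeasurableSpace.comap (fun ω' => Bᵀ.mulVec (X ω')) inferInstance) P X ω j)
      =ᵐ[P] fun _ => fun i j => C i j) :
    condExp (MeasurableSpace.comap (fun ω' => Bᵀ.mulVec (X ω')) inferInstance) P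
        (fun ω => fun i j => X ω i * X ω j - Sig i j)
      =ᵐ[P] fun ω => fun i j =>
        ((Sig * B * (Bᵀ * Sig * B)⁻¹ * Bᵀ) *
          (Matrix.of (fun i' j' => X ω i' * X ω j') - Sig) *
          (Sig * B * (Bᵀ * Sig * B)⁻¹ * Bᵀ)ᵀ) i j := by
  have hBX : Measurable fun ω => Bᵀ *ᵥ X ω := by fun_prop
  exact condExp_mul_sub_ae_eq_of_condExp_ae_eq_mulVec_of_condCov_ae_eq_const
    (measurable_iff_comap_le.mp hBX) hX2 Sig hSig _ hLCM hCCV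

/-- Equation (33): assume `E[X] = 0`, `Sigma` positive definite, the LCM assumption
`E[X | σ(BᵀX)] = P_Σ(B) X` a.s., and the CCV assumption that `Var(X | σ(BᵀX))` is almost
surely a nonrandom matrix. Then
`E[XXᵀ − Sigma | σ(BᵀX)] = P_Σ(B) (XXᵀ − Sigma) P_Σ(B)ᵀ` almost surely, where
`P_Σ(B) = Sigma B (Bᵀ Sigma B)⁻¹ Bᵀ`. -/
theorem statement10
    {Ω : Type*} [mΩ : MeasurableSpace Ω]
    (P : Measure Ω) [IsProbabilityMeasure P]
    {p d : ℕ}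
    (X : Ω → Fin p → ℝ) (hXmeas : Measurable X) (hX2 : MemLp X 2 P)
    (hX0 : ∫ ω, X ω ∂P = 0)
    (Sig : Matrix (Fin p) (Fin p) ℝ)
    (hSig : ∀ i j, Sig i j = ∫ ω, X ω i * X ω j ∂P)
    (hSigpos : Sig.PosDef)
    (B : Matrix (Fin p) (Fin d) ℝ) (hBrank : B.rank = d)
    -- LCM assumption with `P_Σ(B) = Sigma B (Bᵀ Sigma B)⁻¹ Bᵀ`
    (hLCM : condExp (MeasurableSpace.comap (fun ω' => Bᵀ.mulVec (X ω')) inferInstance) P X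
      =ᵐ[P] fun ω => (Sig * B * (Bᵀ * Sig * B)⁻¹ * Bᵀ).mulVec (X ω))
    -- CCV assumption: the conditional variance is a.s. equal to a nonrandom matrix
    (hCCV : ∃ C : Matrix (Fin p) (Fin p) ℝ, (fun ω =>
        condExp (MeasurableSpace.comap (fun ω' => Bᵀ.mulVec (X ω')) inferInstance) P
          (fun ω' => fun i j => X ω' i * X ω' j) ω
        - fun i j =>
            condExp (MeasurableSpace.comap (fun ω' => Bᵀ.mulVec (X ω')) inferInstance) P X ω i *
            condExp (MeasurableSpace.comap (fun ω' => Bᵀ.mulVec (X ω')) inferInstance) P X ω j)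
      =ᵐ[P] fun _ => fun i j => C i j) :
    condExp (MeasurableSpace.comap (fun ω' => Bᵀ.mulVec (X ω')) inferInstance) P
        (fun ω => fun i j => X ω i * X ω j - Sig i j)
      =ᵐ[P] fun ω => fun i j =>
        ((Sig * B * (Bᵀ * Sig * B)⁻¹ * Bᵀ) *
          (Matrix.of (fun i' j' => X ω i' * X ω j') - Sig) *
          (Sig * B * (Bᵀ * Sig * B)⁻¹ * Bᵀ)ᵀ) i j :=
  statement10_general (mΩ := mΩ) P X hXmeas hX2 Sig hSig B hLCM hCCV
end
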